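/- arXiv:2407.15895 — 5 statements merged into one kernel-verified Lean document; each statement's English description precedes it below -/
import Mathlib

section
/- Let n ≥ 1 and N = 2^n, and let S⁻ be the N × N complex matrix S⁻ = Σ_{j=0}^{N−2} |j⟩⟨j+1|. Under the big-endian identification of Fin(2^n) with (Fin 2)^n (binary expansion with the most significant bit corresponding to the first, leftmost Kronecker factor), one has S⁻ = Σ_{j=1}^{n} I^{⊗(n−j)} ⊗ σ01 ⊗ σ10^{⊗(j−1)}, and consequently S⁺ := (S⁻)† = Σ_{j=1}^{n} I^{⊗(n−j)} ⊗ σ10 ⊗ σ01^{⊗(j−1)}. -/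
open Matrix
open scoped Kronecker

/-- `σ01 = |0⟩⟨1|`. -/
noncomputable def sig01 : Matrix (Fin 2) (Fin 2) ℂ := Matrix.single 0 1 1

/-- `σ10 = |1⟩⟨0|`. -/
noncomputable def sig10 : Matrix (Fin 2) (Fin 2) ℂ := Matrix.single 1 0 1

/-- The matrix unit `|a⟩⟨b|` of size `N × N`. -/
noncomputable def matUnit (N : ℕ) (a b : ℕ) : Matrix (Fin N) (Fin N) ℂ :=
  Matrix.of fun x y => if (x : ℕ) = a ∧ (y : ℕ) = b then 1 else 0

/-- The `n`-fold Kronecker product of the 2×2 matrices `M 0, …, M (n-1)` (most significant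
bit = leftmost factor `M 0`), realized on the index type `Fin n → Fin 2`. -/
noncomputable def kronPow (n : ℕ) (M : Fin n → Matrix (Fin 2) (Fin 2) ℂ) :
    Matrix (Fin n → Fin 2) (Fin n → Fin 2) ℂ :=
  Matrix.of fun x y => ∏ i, M i (x i) (y i)

/-- The big-endian identification of `Fin (2^n)` with `(Fin 2)^n`: the `k`-th binary digit of
`x` counting from the most significant bit (so `k = 0` is the leftmost Kronecker factor). -/
def bits (n : ℕ) (x : Fin (2 ^ n)) : Fin n → Fin 2 :=
  fun k => ⟨(x : ℕ) / 2 ^ (n - 1 - (k : ℕ)) % 2, Nat.mod_lt _ (by norm_num)⟩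

/-- The `N × N` shift operator `S⁻ = Σ_{j=0}^{N−2} |j⟩⟨j+1|`, `N = 2^n`. -/
noncomputable def Sminus (n : ℕ) : Matrix (Fin (2 ^ n)) (Fin (2 ^ n)) ℂ :=
  ∑ j ∈ Finset.range (2 ^ n - 1), matUnit (2 ^ n) j (j + 1)

lemma tb_div (x j i : ℕ) : (x / 2^j).testBit i = x.testBit (j + i) := by
  rw [← Nat.shiftRight_eq_div_pow, Nat.testBit_shiftRight]

lemma keyL (x y p : ℕ) :
    ((∀ k, p + 1 ≤ k → x.testBit k = y.testBit k) ∧ x.testBit p = false ∧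
      y.testBit p = true ∧ (∀ k, k < p → x.testBit k = true ∧ y.testBit k = false))
    ↔ (x % 2 ^ (p + 1) = 2 ^ p - 1 ∧ y = x + 1) := by
  constructor
  · rintro ⟨hhi, hxp, hyp, hlo⟩
    have hx : x % 2 ^ (p + 1) = 2 ^ p - 1 := by
      apply Nat.eq_of_testBit_eq
      intro k
      rw [Nat.testBit_mod_two_pow, Nat.testBit_two_pow_sub_one]
      rcases lt_trichotomy k p with h | h | h
      · simp [h, Nat.lt_succ_of_lt h, (hlo k h).1]
      · subst h; simp [hxp]
      · simp [show ¬ k < p + 1 by omega, show ¬ k < p by omega]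
    have hy : y % 2 ^ (p + 1) = 2 ^ p := by
      apply Nat.eq_of_testBit_eq
      intro k
      rw [Nat.testBit_mod_two_pow, Nat.testBit_two_pow]
      rcases lt_trichotomy k p with h | h | h
      · simp [h, Nat.lt_succ_of_lt h, (hlo k h).2]; omega
      · subst h; simp [hyp]
      · simp [show ¬ k < p + 1 by omega, show p ≠ k by omega]
    have hd : x / 2 ^ (p + 1) = y / 2 ^ (p + 1) := by
      apply Nat.eq_of_testBit_eq
      intro k
      rw [tb_div, tb_div]
      exact hhi _ (by omega)
    refine ⟨hx, ?_⟩
    have e1 := Nat.div_add_mod x (2 ^ (p + 1))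
    have e2 := Nat.div_add_mod y (2 ^ (p + 1))
    rw [hd] at e1
    have hp : 1 ≤ 2 ^ p := Nat.one_le_two_pow
    omega
  · rintro ⟨hx, rfl⟩
    have hp : 1 ≤ 2 ^ p := Nat.one_le_two_pow
    have hpp : 2 ^ (p + 1) = 2 * 2 ^ p := by ring
    have e1 := Nat.div_add_mod x (2 ^ (p + 1))
    have hy : (x + 1) % 2 ^ (p + 1) = 2 ^ p := by
      have : x + 1 = 2 ^ p + 2 ^ (p + 1) * (x / 2 ^ (p + 1)) := by omega
      rw [this, Nat.add_mul_mod_self_left, Nat.mod_eq_of_lt (by omega)]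
    have hd : (x + 1) / 2 ^ (p + 1) = x / 2 ^ (p + 1) := by
      have h2 := Nat.div_add_mod (x + 1) (2 ^ (p + 1))
      have hlt : (x + 1) % 2 ^ (p + 1) < 2 ^ (p + 1) := Nat.mod_lt _ (by positivity)
      have hlt2 : x % 2 ^ (p + 1) < 2 ^ (p + 1) := Nat.mod_lt _ (by positivity)
      rcases Nat.lt_trichotomy ((x+1) / 2^(p+1)) (x / 2^(p+1)) with h | h | h
      · nlinarith [Nat.succ_le_of_lt h]
      · exact h
      · have := Nat.succ_le_of_lt h; nlinarith
    have hbitlo : ∀ k, k < p + 1 → x.testBit k = (2 ^ p - 1).testBit k := by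
      intro k hk
      have : x.testBit k = (x % 2 ^ (p+1)).testBit k := by
        rw [Nat.testBit_mod_two_pow]; simp [hk]
      rw [this, hx]
    have hbitlo' : ∀ k, k < p + 1 → (x + 1).testBit k = (2 ^ p).testBit k := by
      intro k hk
      have : (x + 1).testBit k = ((x + 1) % 2 ^ (p+1)).testBit k := by
        rw [Nat.testBit_mod_two_pow]; simp [hk]
      rw [this, hy]
    refine ⟨?_, ?_, ?_, ?_⟩
    · intro k hk
      have : x.testBit ((p+1) + (k - (p+1))) = (x + 1).testBit ((p+1) + (k - (p+1))) := by
        rw [← tb_div, ← tb_div, hd]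
      simpa [Nat.add_sub_cancel' hk] using this
    · rw [hbitlo p (by omega), Nat.testBit_two_pow_sub_one]; simp
    · rw [hbitlo' p (by omega), Nat.testBit_two_pow]; simp
    · intro k hk
      constructor
      · rw [hbitlo k (by omega), Nat.testBit_two_pow_sub_one]; simp [hk]
      · rw [hbitlo' k (by omega), Nat.testBit_two_pow]; simp; omega

lemma biteq_iff (a b k : ℕ) : a / 2^k % 2 = b / 2^k % 2 ↔ a.testBit k = b.testBit k := by
  have ha : a / 2^k % 2 < 2 := Nat.mod_lt _ two_pos
  have hb : b / 2^k % 2 < 2 := Nat.mod_lt _ two_pos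
  simp only [Nat.testBit_eq_decide_div_mod_eq, decide_eq_decide]
  omega

lemma bit0_iff (a k : ℕ) : a / 2^k % 2 = 0 ↔ a.testBit k = false := by
  have ha : a / 2^k % 2 < 2 := Nat.mod_lt _ two_pos
  simp only [Nat.testBit_eq_decide_div_mod_eq, decide_eq_false_iff_not]
  omega

lemma bit1_iff (a k : ℕ) : a / 2^k % 2 = 1 ↔ a.testBit k = true := by
  simp only [Nat.testBit_eq_decide_div_mod_eq, decide_eq_true_eq]

lemma term_eq (n j : ℕ) (hj1 : 1 ≤ j) (hj2 : j ≤ n) (x y : Fin (2 ^ n)) :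
    kronPow n (fun i => if (i : ℕ) < n - j then 1 else if (i : ℕ) = n - j then sig01 else sig10)
      (bits n x) (bits n y)
    = if ((x : ℕ) % 2 ^ j = 2 ^ (j - 1) - 1 ∧ (y : ℕ) = (x : ℕ) + 1) then 1 else 0 := by
  obtain ⟨p, rfl⟩ : ∃ p, j = p + 1 := ⟨j - 1, by omega⟩
  have hpn : p < n := by omega
  classical
  set P : Fin n → Prop := fun i =>
    if (i : ℕ) < n - (p + 1) then ((x : ℕ).testBit (n - 1 - i) = (y : ℕ).testBit (n - 1 - i))
    else if (i : ℕ) = n - (p + 1) then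
      ((x : ℕ).testBit (n - 1 - i) = false ∧ (y : ℕ).testBit (n - 1 - i) = true)
    else ((x : ℕ).testBit (n - 1 - i) = true ∧ (y : ℕ).testBit (n - 1 - i) = false) with hP
  have step1 : kronPow n (fun i => if (i : ℕ) < n - (p + 1) then 1
        else if (i : ℕ) = n - (p + 1) then sig01 else sig10) (bits n x) (bits n y)
      = ∏ i : Fin n, if P i then (1 : ℂ) else 0 := by
    show (∏ i : Fin n, _) = _
    refine Finset.prod_congr rfl fun i _ => ?_
    have hPi1 : (i : ℕ) < n - (p + 1) → (P i ↔ ((x : ℕ).testBit (n - 1 - i) = (y : ℕ).testBit (n - 1 - i))) := by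
      intro h; simp only [hP]; rw [if_pos h]
    have hPi2 : ¬ (i : ℕ) < n - (p + 1) → (i : ℕ) = n - (p + 1) →
        (P i ↔ ((x : ℕ).testBit (n - 1 - i) = false ∧ (y : ℕ).testBit (n - 1 - i) = true)) := by
      intro h h'; simp only [hP]; rw [if_neg h, if_pos h']
    have hPi3 : ¬ (i : ℕ) < n - (p + 1) → ¬ (i : ℕ) = n - (p + 1) →
        (P i ↔ ((x : ℕ).testBit (n - 1 - i) = true ∧ (y : ℕ).testBit (n - 1 - i) = false)) := by
      intro h h'; simp only [hP]; rw [if_neg h, if_neg h']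
    beta_reduce
    by_cases h1 : (i : ℕ) < n - (p + 1)
    · rw [if_pos h1, Matrix.one_apply]
      refine if_congr ?_ rfl rfl
      rw [hPi1 h1, Fin.ext_iff]
      exact biteq_iff _ _ _
    · by_cases h2 : (i : ℕ) = n - (p + 1)
      · rw [if_neg h1, if_pos h2]
        rw [show sig01 (bits n x i) (bits n y i)
            = if (0 : Fin 2) = bits n x i ∧ (1 : Fin 2) = bits n y i then 1 else 0 by
          simp [sig01, Matrix.single]]
        refine if_congr ?_ rfl rfl
        rw [hPi2 h1 h2, @eq_comm _ (0 : Fin 2), @eq_comm _ (1 : Fin 2), Fin.ext_iff, Fin.ext_iff]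
        exact and_congr (bit0_iff _ _) (bit1_iff _ _)
      · rw [if_neg h1, if_neg h2]
        rw [show sig10 (bits n x i) (bits n y i)
            = if (1 : Fin 2) = bits n x i ∧ (0 : Fin 2) = bits n y i then 1 else 0 by
          simp [sig10, Matrix.single]]
        refine if_congr ?_ rfl rfl
        rw [hPi3 h1 h2, @eq_comm _ (1 : Fin 2), @eq_comm _ (0 : Fin 2), Fin.ext_iff, Fin.ext_iff]
        exact and_congr (bit1_iff _ _) (bit0_iff _ _)
  rw [step1, Finset.prod_boole, show p + 1 - 1 = p by omega]
  have hiff : (∀ i ∈ Finset.univ, P i) ↔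
      ((x : ℕ) % 2 ^ (p + 1) = 2 ^ p - 1 ∧ (y : ℕ) = (x : ℕ) + 1) := by
    rw [← keyL (x : ℕ) (y : ℕ) p]
    simp only [Finset.mem_univ, forall_true_left]
    constructor
    · intro H
      refine ⟨?_, ?_, ?_, ?_⟩
      · intro k hk
        by_cases hkn : k < n
        · have hi := H ⟨n - 1 - k, by omega⟩
          simp only [hP] at hi
          rw [if_pos (show n - 1 - k < n - (p + 1) by omega)] at hi
          rwa [show n - 1 - (n - 1 - k) = k by omega] at hi
        · rw [Nat.testBit_lt_two_pow (lt_of_lt_of_le x.2 (Nat.pow_le_pow_right (by norm_num) (by omega))),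
            Nat.testBit_lt_two_pow (lt_of_lt_of_le y.2 (Nat.pow_le_pow_right (by norm_num) (by omega)))]
      · have hi := H ⟨n - (p + 1), by omega⟩
        simp only [hP] at hi
        rw [if_neg (lt_irrefl _), show n - 1 - (n - (p + 1)) = p by omega] at hi
        exact hi.1
      · have hi := H ⟨n - (p + 1), by omega⟩
        simp only [hP] at hi
        rw [if_neg (lt_irrefl _), show n - 1 - (n - (p + 1)) = p by omega] at hi
        exact hi.2
      · intro k hk
        have hi := H ⟨n - 1 - k, by omega⟩
        simp only [hP] at hi
        rw [if_neg (show ¬ n - 1 - k < n - (p + 1) by omega),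
          if_neg (show ¬ n - 1 - k = n - (p + 1) by omega),
          show n - 1 - (n - 1 - k) = k by omega] at hi
        exact hi
    · rintro ⟨hhi, hxp, hyp, hlo⟩ i
      simp only [hP]
      split_ifs with h1 h2
      · exact hhi _ (by omega)
      · have : n - 1 - (i : ℕ) = p := by omega
        rw [this]; exact ⟨hxp, hyp⟩
      · exact hlo _ (by omega)

  simp only [hiff]

lemma Sminus_apply (n : ℕ) (x y : Fin (2 ^ n)) :
    Sminus n x y = if (y : ℕ) = (x : ℕ) + 1 then 1 else 0 := by
  unfold Sminus
  rw [Matrix.sum_apply]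
  simp only [matUnit, Matrix.of_apply]
  by_cases h : (y : ℕ) = (x : ℕ) + 1
  · rw [if_pos h]
    have hx : (x : ℕ) < 2 ^ n - 1 := by have := y.2; omega
    rw [Finset.sum_eq_single_of_mem (x : ℕ) (Finset.mem_range.mpr hx)]
    · rw [if_pos ⟨rfl, h⟩]
    · intro j _ hne
      rw [if_neg]
      rintro ⟨h1, -⟩
      exact hne h1.symm
  · rw [if_neg h]
    refine Finset.sum_eq_zero fun j _ => ?_
    rw [if_neg]
    rintro ⟨h1, h2⟩
    exact h (by omega)

lemma rhs_sum (n : ℕ) (hn : 1 ≤ n) (x y : Fin (2 ^ n)) :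
    (∑ j ∈ Finset.Icc 1 n, kronPow n fun i =>
        if (i : ℕ) < n - j then 1 else if (i : ℕ) = n - j then sig01 else sig10)
      (bits n x) (bits n y) = if (y : ℕ) = (x : ℕ) + 1 then 1 else 0 := by
  rw [Matrix.sum_apply]
  rw [Finset.sum_congr rfl fun j hj => term_eq n j (Finset.mem_Icc.mp hj).1
    (Finset.mem_Icc.mp hj).2 x y]
  by_cases h : (y : ℕ) = (x : ℕ) + 1
  · rw [if_pos h]
    have hQ : ∃ k, (x : ℕ).testBit k = false := by
      by_contra hc
      push_neg at hc
      have hall : ∀ k, (x : ℕ).testBit k = true := fun k => by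
        have := hc k; simpa using this
      have hxn : (x : ℕ).testBit n = false :=
        Nat.testBit_lt_two_pow x.2
      rw [hall n] at hxn; simp at hxn
    set p := Nat.find hQ with hpdef
    have hp : (x : ℕ).testBit p = false := Nat.find_spec hQ
    have hmin : ∀ k, k < p → (x : ℕ).testBit k = true := fun k hk => by
      have := Nat.find_min hQ hk; simpa using this
    have hpn : p < n := by
      have hy2 : (x : ℕ) + 1 < 2 ^ n := by rw [← h]; exact y.2
      by_contra hc
      push_neg at hc
      have hxall : (x : ℕ) = 2 ^ n - 1 := by
        apply Nat.eq_of_testBit_eq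
        intro k
        rw [Nat.testBit_two_pow_sub_one]
        by_cases hk : k < n
        · simp [hk, hmin k (lt_of_lt_of_le hk hc)]
        · simp only [hk, decide_eq_false_iff_not, Bool.false_eq_true]
          show (↑x : ℕ).testBit k = false
          exact Nat.testBit_lt_two_pow (lt_of_lt_of_le x.2
            (Nat.pow_le_pow_right (by norm_num) (by omega)))
      omega
    have hxmod : (x : ℕ) % 2 ^ (p + 1) = 2 ^ p - 1 := by
      apply Nat.eq_of_testBit_eq
      intro k
      rw [Nat.testBit_mod_two_pow, Nat.testBit_two_pow_sub_one]
      rcases lt_trichotomy k p with h' | h' | h'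
      · simp [h', Nat.lt_succ_of_lt h', hmin k h']
      · subst h'; simp [hp]
      · simp [show ¬ k < p + 1 by omega, show ¬ k < p by omega]
    rw [Finset.sum_eq_single_of_mem (p + 1) (Finset.mem_Icc.mpr ⟨by omega, by omega⟩)]
    · rw [if_pos ⟨by simpa using hxmod, h⟩]
    · intro j hj hne
      rw [if_neg]
      rintro ⟨h1, -⟩
      obtain ⟨hj1, hj2⟩ := Finset.mem_Icc.mp hj
      obtain ⟨q, rfl⟩ : ∃ q, j = q + 1 := ⟨j - 1, by omega⟩
      rw [show q + 1 - 1 = q by omega] at h1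
      have hq : (x : ℕ).testBit q = false := by
        have : ((x : ℕ) % 2 ^ (q + 1)).testBit q = (x : ℕ).testBit q := by
          rw [Nat.testBit_mod_two_pow]; simp
        rw [← this, h1, Nat.testBit_two_pow_sub_one]; simp
      have hpq : p ≤ q := Nat.find_min' hQ hq
      rcases Nat.lt_or_ge p q with h' | h'
      · have : ((x : ℕ) % 2 ^ (q + 1)).testBit p = (x : ℕ).testBit p := by
          rw [Nat.testBit_mod_two_pow]; simp [show p < q + 1 by omega]
        rw [h1, Nat.testBit_two_pow_sub_one] at this
        simp [h'] at this
        simp [this] at hp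
      · exact hne (by omega)
  · rw [if_neg h]
    refine Finset.sum_eq_zero fun j _ => ?_
    rw [if_neg]
    rintro ⟨-, h2⟩
    exact h h2

lemma rhs_swap (n : ℕ) (x y : Fin (2 ^ n)) :
    (∑ j ∈ Finset.Icc 1 n, kronPow n fun i =>
        if (i : ℕ) < n - j then 1 else if (i : ℕ) = n - j then sig10 else sig01)
      (bits n x) (bits n y)
    = (∑ j ∈ Finset.Icc 1 n, kronPow n fun i =>
        if (i : ℕ) < n - j then 1 else if (i : ℕ) = n - j then sig01 else sig10)
      (bits n y) (bits n x) := by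
  rw [Matrix.sum_apply, Matrix.sum_apply]
  refine Finset.sum_congr rfl fun j _ => ?_
  show (∏ i : Fin n, _) = ∏ i : Fin n, _
  refine Finset.prod_congr rfl fun i _ => ?_
  beta_reduce
  by_cases h1 : (i : ℕ) < n - j
  · rw [if_pos h1, if_pos h1, Matrix.one_apply, Matrix.one_apply]
    exact if_congr eq_comm rfl rfl
  · by_cases h2 : (i : ℕ) = n - j
    · rw [if_neg h1, if_neg h1, if_pos h2, if_pos h2]
      simp [sig01, sig10, Matrix.single, and_comm]
    · rw [if_neg h1, if_neg h1, if_neg h2, if_neg h2]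
      simp [sig01, sig10, Matrix.single, and_comm]

/-- For `n ≥ 1` and `N = 2^n`, under the big-endian identification of
`Fin (2^n)` with `(Fin 2)^n` one has
`S⁻ = Σ_{j=1}^{n} I^{⊗(n−j)} ⊗ σ01 ⊗ σ10^{⊗(j−1)}` and consequently
`S⁺ = (S⁻)† = Σ_{j=1}^{n} I^{⊗(n−j)} ⊗ σ10 ⊗ σ01^{⊗(j−1)}`. -/
theorem shift_operator_decomposition (n : ℕ) (hn : 1 ≤ n) :
    (∀ x y : Fin (2 ^ n), Sminus n x y =
      (∑ j ∈ Finset.Icc 1 n, kronPow n fun i =>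
        if (i : ℕ) < n - j then 1 else if (i : ℕ) = n - j then sig01 else sig10)
        (bits n x) (bits n y)) ∧
    (∀ x y : Fin (2 ^ n), (Sminus n)ᴴ x y =
      (∑ j ∈ Finset.Icc 1 n, kronPow n fun i =>
        if (i : ℕ) < n - j then 1 else if (i : ℕ) = n - j then sig10 else sig01)
        (bits n x) (bits n y)) := by
  constructor
  · intro x y
    rw [Sminus_apply, rhs_sum n hn]
  · intro x y
    rw [Matrix.conjTranspose_apply, Sminus_apply, rhs_swap, rhs_sum n hn]
    split_ifs <;> simp
end

section
/- Let V be an n × n complex matrix, let a ≥ 1 and J = 2^a. For 0 ≤ m ≤ a−1 let P_m = Σ_{j : bit_m(j)=1} |j⟩⟨j| be the J × J diagonal projection onto those basis indices j whose m-th binary digit equals 1. Then the ordered product Π_{m=0}^{a−1} ( V^{2^m} ⊗ P_m + I_n ⊗ (I_J − P_m) ) equals the select oracle Σ_{j=0}^{J−1} V^j ⊗ |j⟩⟨j|. (Moreover the a factors commute pairwise, so the product may be taken in any order.) -/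
/-! The select oracle and each controlled power are block diagonal with respect to the second
register, with all blocks powers of `V`; hence the factors commute, and the product reduces to
the blockwise identity `∏_m V ^ (bit_m(j) 2^m) = V ^ j`, i.e. to the binary expansion of `j`. -/

open Matrix
open scoped Kronecker

/-- `P_m = Σ_{j : bit_m(j) = 1} |j⟩⟨j|`, the `2^a × 2^a` diagonal projection onto those
basis indices `j` whose `m`-th binary digit equals `1`. -/
noncomputable def bitProj (a m : ℕ) : Matrix (Fin (2 ^ a)) (Fin (2 ^ a)) ℂ :=
  Matrix.of fun x y => if x = y ∧ Nat.testBit (x : ℕ) m then 1 else 0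

/-! The select oracle and each controlled power are block diagonal with respect to the second
register, with all blocks powers of `V`; hence the factors commute, and the product reduces to
the blockwise identity `∏_m V ^ (bit_m(j) 2^m) = V ^ j`, i.e. to the binary expansion of `j`. -/
theorem Nat.sum_range_testBit_two_pow {j a : ℕ} (hj : j < 2 ^ a) :
    ∑ m ∈ Finset.range a, (if j.testBit m then 2 ^ m else 0) = j := by
  have hbits : (Finset.range a).filter (j.testBit · = true) = j.bitIndices.toFinset := by
    ext i
    simp only [Finset.mem_filter, Finset.mem_range, List.mem_toFinset, Nat.mem_bitIndices,
      and_iff_right_iff_imp]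
    intro hi
    by_contra! hai
    simp [Nat.testBit_eq_false_of_lt (hj.trans_le (Nat.pow_le_pow_right two_pos hai))] at hi
  rw [← Finset.sum_filter, hbits, Finset.sum_toFinset_bitIndices_two_pow]

theorem List.prod_ofFn_pow {M : Type*} [Monoid M] (x : M) {a : ℕ} (k : Fin a → ℕ) :
    (List.ofFn fun m => x ^ k m).prod = x ^ ∑ m, k m := by
  induction a with
  | zero => simp
  | succ a ih => rw [List.ofFn_succ, List.prod_cons, ih, Fin.sum_univ_succ, pow_add]

theorem sum_range_kronecker_matUnit {n : Type*} [Fintype n] {N : ℕ} (f : ℕ → Matrix n n ℂ) :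
    ∑ j ∈ Finset.range N, f j ⊗ₖ matUnit N j j = blockDiagonal fun j : Fin N => f j := by
  rw [← Fin.sum_univ_eq_sum_range (fun j => f j ⊗ₖ matUnit N j j)]
  ext ⟨i, k⟩ ⟨i', k'⟩
  simp only [Matrix.sum_apply, kroneckerMap_apply, matUnit, of_apply, Fin.val_inj,
    blockDiagonal_apply, mul_ite, mul_one, mul_zero, ite_and, Finset.sum_ite_eq,
    Finset.mem_univ, if_true]
  simp_rw [eq_comm]

theorem Matrix.list_prod_ofFn_blockDiagonal {m o α : Type*} [Fintype m] [DecidableEq m]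
    [Fintype o] [DecidableEq o] [Semiring α] {a : ℕ} (M : Fin a → o → Matrix m m α) :
    (List.ofFn fun i => blockDiagonal (M i)).prod =
      blockDiagonal fun k => (List.ofFn fun i => M i k).prod := calc
  _ = ((List.ofFn M).map (blockDiagonalRingHom m o α)).prod := by rw [List.map_ofFn]; rfl
  _ = blockDiagonal (List.ofFn M).prod := (map_list_prod _ _).symm
  _ = _ := by congr 1; funext k; rw [Pi.list_prod_apply, List.map_ofFn]; rfl

theorem kronecker_bitProj_add_one_kronecker {n : Type*} [Fintype n] [DecidableEq n]
    (U : Matrix n n ℂ) (a m : ℕ) :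
    U ⊗ₖ bitProj a m + (1 : Matrix n n ℂ) ⊗ₖ (1 - bitProj a m) =
      blockDiagonal fun j : Fin (2 ^ a) => if (j : ℕ).testBit m then U else 1 := by
  ext ⟨i, k⟩ ⟨i', k'⟩
  obtain rfl | hk := eq_or_ne k k'
  · by_cases hb : (k : ℕ).testBit m <;> simp [bitProj, one_apply, hb]
  · simp [bitProj, blockDiagonal_apply, hk]

theorem select_oracle_product_general {n : ℕ} (V : Matrix (Fin n) (Fin n) ℂ) (a : ℕ) :
    (∀ m m' : Fin a, Commute
        ((V ^ 2 ^ (m : ℕ)) ⊗ₖ bitProj a m + (1 : Matrix (Fin n) (Fin n) ℂ) ⊗ₖ (1 - bitProj a m))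
        ((V ^ 2 ^ (m' : ℕ)) ⊗ₖ bitProj a m'
          + (1 : Matrix (Fin n) (Fin n) ℂ) ⊗ₖ (1 - bitProj a m'))) ∧
    (List.ofFn fun m : Fin a =>
        (V ^ 2 ^ (m : ℕ)) ⊗ₖ bitProj a m
          + (1 : Matrix (Fin n) (Fin n) ℂ) ⊗ₖ (1 - bitProj a m)).prod =
      ∑ j ∈ Finset.range (2 ^ a), (V ^ j) ⊗ₖ matUnit (2 ^ a) j j := by
  have hfactor : ∀ m : ℕ,
      (V ^ 2 ^ m) ⊗ₖ bitProj a m + (1 : Matrix (Fin n) (Fin n) ℂ) ⊗ₖ (1 - bitProj a m) =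
        blockDiagonal fun j : Fin (2 ^ a) => V ^ (if (j : ℕ).testBit m then 2 ^ m else 0) := by
    intro m
    simp only [kronecker_bitProj_add_one_kronecker, pow_ite, pow_zero]
  simp only [hfactor]
  refine ⟨fun m m' => (Pi.commute_iff.2 fun j => Commute.pow_pow_self V _ _).map
    (blockDiagonalRingHom (Fin n) (Fin (2 ^ a)) ℂ), ?_⟩
  rw [list_prod_ofFn_blockDiagonal, sum_range_kronecker_matUnit]
  congr 1
  funext j
  rw [List.prod_ofFn_pow,
    Fin.sum_univ_eq_sum_range (fun m => if (j : ℕ).testBit m then 2 ^ m else 0),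
    Nat.sum_range_testBit_two_pow j.isLt]

/-- Let `V` be an `n × n` complex matrix, `a ≥ 1` and `J = 2^a`.  The ordered
product `Π_{m=0}^{a−1} (V^{2^m} ⊗ P_m + I_n ⊗ (I_J − P_m))` equals the select oracle
`Σ_{j=0}^{J−1} V^j ⊗ |j⟩⟨j|`; moreover the `a` factors commute pairwise (so the product may be
taken in any order). -/
theorem select_oracle_product {n : ℕ} (V : Matrix (Fin n) (Fin n) ℂ) (a : ℕ) (ha : 1 ≤ a) :
    (∀ m m' : Fin a, Commute
        ((V ^ 2 ^ (m : ℕ)) ⊗ₖ bitProj a m + (1 : Matrix (Fin n) (Fin n) ℂ) ⊗ₖ (1 - bitProj a m))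
        ((V ^ 2 ^ (m' : ℕ)) ⊗ₖ bitProj a m'
          + (1 : Matrix (Fin n) (Fin n) ℂ) ⊗ₖ (1 - bitProj a m'))) ∧
    (List.ofFn fun m : Fin a =>
        (V ^ 2 ^ (m : ℕ)) ⊗ₖ bitProj a m
          + (1 : Matrix (Fin n) (Fin n) ℂ) ⊗ₖ (1 - bitProj a m)).prod =
      ∑ j ∈ Finset.range (2 ^ a), (V ^ j) ⊗ₖ matUnit (2 ^ a) j j :=
  select_oracle_product_general V a
end

section
/- Let A be an N × N complex matrix, write H₁ = (A + A†)/2 and H₂ = (A − A†)/(2i), let f : ℝ → ℂ^N, and let u : ℝ → ℂ^N be differentiable with u'(t) = A·u(t) + f(t) for all t. Define v(t,p) = e^{−p}·u(t) for t, p ∈ ℝ. Then for all t and p, the partial derivatives of v satisfy ∂_t v(t,p) = −H₁·(∂_p v(t,p)) + i H₂·v(t,p) + e^{−p} f(t). -/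
open Matrix

/-- **warped phase transformation.** Let `A` be an `N × N` complex matrix with
Hermitian part `H₁ = (A + A†)/2` and anti-Hermitian part `H₂ = (A − A†)/(2i)`, let
`f : ℝ → ℂ^N`, and let `u : ℝ → ℂ^N` be differentiable with `u'(t) = A u(t) + f(t)`.
Define `v(t,p) = e^{−p} u(t)`.  Then for all `t` and `p`,
`∂_t v(t,p) = −H₁ (∂_p v(t,p)) + i H₂ v(t,p) + e^{−p} f(t)`
(partial derivatives taken componentwise via `deriv` in each variable). -/
theorem warped_phase_transformation {N : ℕ} (A : Matrix (Fin N) (Fin N) ℂ)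
    (f : ℝ → Fin N → ℂ) (u : ℝ → Fin N → ℂ)
    (hu : ∀ t, HasDerivAt u (A.mulVec (u t) + f t) t)
    (v : ℝ → ℝ → Fin N → ℂ)
    (hv : v = fun t p => (Real.exp (-p) : ℂ) • u t) :
    ∀ t p : ℝ,
      deriv (fun s => v s p) t =
        -(((2 : ℂ)⁻¹ • (A + Aᴴ)).mulVec (deriv (fun q => v t q) p))
          + Complex.I • ((2 * Complex.I)⁻¹ • (A - Aᴴ)).mulVec (v t p)
          + (Real.exp (-p) : ℂ) • f t := by
  subst hv
  intro t p
  have h1 : HasDerivAt (fun s => (Real.exp (-p) : ℂ) • u s)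
      ((Real.exp (-p) : ℂ) • (A.mulVec (u t) + f t)) t := (hu t).const_smul ((Real.exp (-p) : ℂ))
  have hexp : HasDerivAt (fun q : ℝ => ((Real.exp (-q) : ℝ) : ℂ))
      (-(Real.exp (-p) : ℂ)) p := by
    have h := (Real.hasDerivAt_exp (-p)).comp p ((hasDerivAt_id p).neg)
    have := h.ofReal_comp
    simpa using this
  have h2 : HasDerivAt (fun q : ℝ => (Real.exp (-q) : ℂ) • u t)
      ((-(Real.exp (-p) : ℂ)) • u t) p := hexp.smul_const _
  rw [h1.deriv, h2.deriv]
  simp only [Matrix.smul_mulVec, Matrix.mulVec_smul, Matrix.add_mulVec,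
    Matrix.sub_mulVec, Matrix.mulVec_neg, smul_add, smul_sub, smul_smul, neg_smul, smul_neg, neg_neg]
  funext i
  simp only [Pi.add_apply, Pi.sub_apply, Pi.smul_apply, Pi.neg_apply, smul_eq_mul]
  have h2i : (2 * Complex.I) ≠ 0 := by
    simp [Complex.I_ne_zero]
  field_simp
  ring
end

section
/- Let H : ℝ → Matrix n n ℂ be continuous with H(t) Hermitian for every t, and suppose U : ℝ → Matrix n n ℂ satisfies U(t₀) = I and U'(t) = −i·H(t)·U(t) for all t. Then U(t) is unitary for every t, i.e. U(t)† · U(t) = I. -/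
open Matrix

/-- Let `H : ℝ → Matrix n n ℂ` be continuous with `H t` Hermitian for
every `t`, and suppose `U : ℝ → Matrix n n ℂ` satisfies `U t₀ = I` and (entrywise)
`U'(t) = −i H(t) U(t)` for all `t`.  Then `U t` is unitary for every `t`:
`(U t)† (U t) = I`. -/
theorem propagator_unitary {n : ℕ} (H : ℝ → Matrix (Fin n) (Fin n) ℂ)
    (hH : Continuous H) (hHerm : ∀ t, (H t)ᴴ = H t)
    (U : ℝ → Matrix (Fin n) (Fin n) ℂ) (t₀ : ℝ) (hU0 : U t₀ = 1)
    (hU' : ∀ t, ∀ i k, HasDerivAt (fun τ => U τ i k)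
        (((-Complex.I) • (H t * U t)) i k) t) :
    ∀ t, (U t)ᴴ * U t = 1 := by
  intro t
  ext i k
  have key : ∀ s, HasDerivAt (fun τ => ((U τ)ᴴ * (U τ)) i k) 0 s := by
    intro s
    have h1 : ∀ j : Fin n, HasDerivAt
        (fun τ => star (U τ j i) * U τ j k)
        (star (((-Complex.I) • (H s * U s)) j i) * U s j k
          + star (U s j i) * ((-Complex.I) • (H s * U s)) j k) s := by
      intro j
      exact ((hU' s j i).star).mul (hU' s j k)
    have hsum := HasDerivAt.sum (fun j (_ : j ∈ Finset.univ) => h1 j)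
    have hfun : (fun τ => ((U τ)ᴴ * (U τ)) i k)
        = fun τ => ∑ j, star (U τ j i) * U τ j k := by
      funext τ
      simp [Matrix.mul_apply, Matrix.conjTranspose_apply]
    rw [hfun]
    convert hsum using 1
    case e'_4 => rfl
    case e'_8 => funext τ; simp [Finset.sum_apply]
    have hmat : (∑ j, (star (((-Complex.I) • (H s * U s)) j i) * U s j k
          + star (U s j i) * ((-Complex.I) • (H s * U s)) j k))
        = ((((-Complex.I) • (H s * U s))ᴴ * U s)
            + (U s)ᴴ * ((-Complex.I) • (H s * U s))) i k := by
      simp only [Matrix.add_apply, Matrix.mul_apply, Matrix.conjTranspose_apply,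
        Finset.sum_add_distrib]
    rw [hmat]
    have : (((-Complex.I) • (H s * U s))ᴴ * U s)
            + (U s)ᴴ * ((-Complex.I) • (H s * U s)) = 0 := by
      rw [Matrix.conjTranspose_smul, Matrix.conjTranspose_mul, hHerm]
      simp [Matrix.smul_mul, Matrix.mul_smul, Matrix.mul_assoc, Complex.conj_I]
    rw [this]
    simp
  have hconst : (fun τ => ((U τ)ᴴ * (U τ)) i k) t
      = (fun τ => ((U τ)ᴴ * (U τ)) i k) t₀ :=
    is_const_of_deriv_eq_zero (fun s => (key s).differentiableAt)
      (fun s => (key s).deriv) t t₀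
  simp only at hconst
  rw [hconst, hU0]
  simp
end

section
/- Let U and V be n × n complex matrices with U unitary and ‖V‖ ≤ 1, let T > 0, K ≥ 1, Δs = T/K, and suppose ‖V − U‖ ≤ C·Δs² for some C ≥ 0. Then for any vectors b_0, …, b_{K−1} ∈ ℂ^n, ‖ Δs·V^K·Σ_{j=0}^{K−1} V^j b_j − Δs·U^K·Σ_{j=0}^{K−1} U^j b_j ‖ ≤ (2C·T²/K) · ( Δs·Σ_{j=0}^{K−1} ‖b_j‖ ). -/
open Matrix
open scoped Matrix.Norms.L2Operator

private lemma norm_one_le_one' {n : ℕ} : ‖(1 : Matrix (Fin n) (Fin n) ℂ)‖ ≤ 1 := by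
  rw [Matrix.cstar_norm_def, _root_.map_one]
  exact ContinuousLinearMap.norm_id_le

private lemma norm_unitary_le_one {n : ℕ} {U : Matrix (Fin n) (Fin n) ℂ}
    (hU : U ∈ Matrix.unitaryGroup (Fin n) ℂ) : ‖U‖ ≤ 1 := by
  have h1 : Uᴴ * U = 1 := hU.1
  have h2 : ‖U‖ * ‖U‖ = ‖Uᴴ * U‖ := (Matrix.l2_opNorm_conjTranspose_mul_self U).symm
  rw [h1] at h2
  nlinarith [norm_nonneg U, norm_one_le_one' (n := n)]

private lemma norm_pow_le_one' {n : ℕ} {A : Matrix (Fin n) (Fin n) ℂ} (hA : ‖A‖ ≤ 1)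
    (m : ℕ) : ‖A ^ m‖ ≤ 1 := by
  induction m with
  | zero => simpa using norm_one_le_one' (n := n)
  | succ m ih =>
    rw [pow_succ]
    calc ‖A ^ m * A‖ ≤ ‖A ^ m‖ * ‖A‖ := norm_mul_le _ _
    _ ≤ 1 * 1 := by
        exact mul_le_mul ih hA (norm_nonneg _) zero_le_one
    _ = 1 := one_mul 1

private lemma norm_pow_sub_pow_le' {n : ℕ} {A B : Matrix (Fin n) (Fin n) ℂ}
    (hA : ‖A‖ ≤ 1) (hB : ‖B‖ ≤ 1) (m : ℕ) :
    ‖A ^ m - B ^ m‖ ≤ m * ‖A - B‖ := by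
  induction m with
  | zero => simp
  | succ m ih =>
    have key : A ^ (m + 1) - B ^ (m + 1) = A * (A ^ m - B ^ m) + (A - B) * B ^ m := by
      rw [pow_succ', pow_succ']; noncomm_ring
    calc ‖A ^ (m + 1) - B ^ (m + 1)‖
        ≤ ‖A * (A ^ m - B ^ m)‖ + ‖(A - B) * B ^ m‖ := by rw [key]; exact norm_add_le _ _
      _ ≤ ‖A‖ * ‖A ^ m - B ^ m‖ + ‖A - B‖ * ‖B ^ m‖ :=
          add_le_add (norm_mul_le _ _) (norm_mul_le _ _)
      _ ≤ 1 * (m * ‖A - B‖) + ‖A - B‖ * 1 :=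
          add_le_add
            (mul_le_mul hA ih (by positivity) zero_le_one)
            (mul_le_mul_of_nonneg_left (norm_pow_le_one' hB m) (norm_nonneg _))
      _ = (m + 1 : ℕ) * ‖A - B‖ := by push_cast; ring

/-- **accumulated circuit-approximation error.** Let `U`, `V` be `n × n`
complex matrices with `U` unitary and `‖V‖ ≤ 1`, let `T > 0`, `K ≥ 1`, `Δs = T/K`, and
suppose `‖V − U‖ ≤ C Δs²` with `C ≥ 0`.  Then for any vectors `b_0, …, b_{K−1} ∈ ℂ^n`,
`‖Δs V^K Σ_j V^j b_j − Δs U^K Σ_j U^j b_j‖ ≤ (2CT²/K)(Δs Σ_j ‖b_j‖)`,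
with the (L2) operator norm on matrices and Euclidean norms on vectors. -/
theorem accumulated_select_error {n : ℕ} (U V : Matrix (Fin n) (Fin n) ℂ)
    (hU : U ∈ Matrix.unitaryGroup (Fin n) ℂ) (hV : ‖V‖ ≤ 1)
    (T : ℝ) (hT : 0 < T) (K : ℕ) (hK : 1 ≤ K)
    (C : ℝ) (hC : 0 ≤ C) (hVU : ‖V - U‖ ≤ C * (T / K) ^ 2)
    (b : Fin K → EuclideanSpace ℂ (Fin n)) :
    ‖(T / K : ℝ) • (Matrix.toEuclideanCLM (𝕜 := ℂ) (V ^ K))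
        (∑ j : Fin K, (Matrix.toEuclideanCLM (𝕜 := ℂ) (V ^ (j : ℕ))) (b j)) -
      (T / K : ℝ) • (Matrix.toEuclideanCLM (𝕜 := ℂ) (U ^ K))
        (∑ j : Fin K, (Matrix.toEuclideanCLM (𝕜 := ℂ) (U ^ (j : ℕ))) (b j))‖
      ≤ 2 * C * T ^ 2 / K * ((T / K) * ∑ j : Fin K, ‖b j‖) := by
  have hU1 : ‖U‖ ≤ 1 := norm_unitary_le_one hU
  have hKpos : (0 : ℝ) < K := by exact_mod_cast hK
  -- rewrite each side as a sum over j of applications of powers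
  have hrw : ∀ (A : Matrix (Fin n) (Fin n) ℂ),
      (Matrix.toEuclideanCLM (𝕜 := ℂ) (A ^ K))
        (∑ j : Fin K, (Matrix.toEuclideanCLM (𝕜 := ℂ) (A ^ (j : ℕ))) (b j))
      = ∑ j : Fin K, (Matrix.toEuclideanCLM (𝕜 := ℂ) (A ^ (K + (j : ℕ)))) (b j) := by
    intro A
    rw [map_sum]
    refine Finset.sum_congr rfl fun j _ => ?_
    rw [pow_add, _root_.map_mul]
    rfl
  rw [hrw, hrw, ← smul_sub, ← Finset.sum_sub_distrib]
  have hterm : ∀ j : Fin K,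
      ‖(Matrix.toEuclideanCLM (𝕜 := ℂ) (V ^ (K + (j : ℕ)))) (b j)
        - (Matrix.toEuclideanCLM (𝕜 := ℂ) (U ^ (K + (j : ℕ)))) (b j)‖
      ≤ 2 * K * (C * (T / K) ^ 2) * ‖b j‖ := by
    intro j
    have h1 : (Matrix.toEuclideanCLM (𝕜 := ℂ) (V ^ (K + (j : ℕ)))) (b j)
        - (Matrix.toEuclideanCLM (𝕜 := ℂ) (U ^ (K + (j : ℕ)))) (b j)
        = (Matrix.toEuclideanCLM (𝕜 := ℂ) (V ^ (K + (j : ℕ)) - U ^ (K + (j : ℕ)))) (b j) := by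
      rw [_root_.map_sub]; rfl
    rw [h1]
    calc ‖(Matrix.toEuclideanCLM (𝕜 := ℂ) (V ^ (K + (j : ℕ)) - U ^ (K + (j : ℕ)))) (b j)‖
        ≤ ‖V ^ (K + (j : ℕ)) - U ^ (K + (j : ℕ))‖ * ‖b j‖ :=
          (Matrix.toEuclideanCLM (𝕜 := ℂ) (V ^ (K + (j : ℕ)) - U ^ (K + (j : ℕ)))).le_opNorm (b j)
      _ ≤ ((K + (j : ℕ) : ℕ) * ‖V - U‖) * ‖b j‖ := by
          gcongr
          exact norm_pow_sub_pow_le' hV hU1 _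
      _ ≤ 2 * K * (C * (T / K) ^ 2) * ‖b j‖ := by
          have hj : ((K + (j : ℕ) : ℕ) : ℝ) ≤ 2 * K := by
            have hjK : ((j : ℕ) : ℝ) ≤ K := by exact_mod_cast le_of_lt j.2
            push_cast
            linarith
          have hnn : (0 : ℝ) ≤ ‖V - U‖ := norm_nonneg _
          have hf : ((K + (j : ℕ) : ℕ) : ℝ) * ‖V - U‖ ≤ 2 * K * (C * (T / K) ^ 2) :=
            (mul_le_mul hj hVU hnn (by positivity))
          exact mul_le_mul_of_nonneg_right hf (norm_nonneg _)
  calc ‖(T / K : ℝ) • ∑ j : Fin K,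
        ((Matrix.toEuclideanCLM (𝕜 := ℂ) (V ^ (K + (j : ℕ)))) (b j)
          - (Matrix.toEuclideanCLM (𝕜 := ℂ) (U ^ (K + (j : ℕ)))) (b j))‖
      = (T / K) * ‖∑ j : Fin K,
        ((Matrix.toEuclideanCLM (𝕜 := ℂ) (V ^ (K + (j : ℕ)))) (b j)
          - (Matrix.toEuclideanCLM (𝕜 := ℂ) (U ^ (K + (j : ℕ)))) (b j))‖ := by
        rw [norm_smul, Real.norm_eq_abs, abs_of_pos (by positivity)]
    _ ≤ (T / K) * ∑ j : Fin K, (2 * K * (C * (T / K) ^ 2) * ‖b j‖) := by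
        gcongr
        exact (norm_sum_le _ _).trans (Finset.sum_le_sum fun j _ => hterm j)
    _ = 2 * C * T ^ 2 / K * ((T / K) * ∑ j : Fin K, ‖b j‖) := by
        rw [← Finset.mul_sum]
        field_simp
end
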